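/- In the setting of a smooth quadric bundle X ∈ |2ξ + π*L| ⊂ ℙ(E) over a smooth curve C (E of rank 5), for m ≫ 0 and S = H₁ ∩ H₂ with H₁, H₂ ∈ |-mK_X| general: ch₂(T_X)·S = m²(15·deg E* - (75/2)·deg L - 6·deg K_C) = -(15/2)m²(deg Δ_f + (4/5)deg K_C), where Δ_f ∈ |2 det E + 5L| is the discriminant divisor. -/
import Mathlib


/-- For a smooth quadric bundle `X ∈ |2ξ + π*L| ⊂ ℙ(E)` over a smooth curve `C`
(`E` of rank 5), for `m ≫ 0` and `S = H₁ ∩ H₂` with `H₁, H₂ ∈ |-mK_X|` general: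
`ch₂(T_X)·S = m²(15 deg E* - (75/2) deg L - 6 deg K_C)
            = -(15/2) m² (deg Δ_f + (4/5) deg K_C)`,
where `Δ_f ∈ |2 det E + 5L|` is the discriminant divisor (so `deg Δ_f = -2 dE + 5 dL`).

Encoding: `A` is the rational Chow ring of `ℙ(E)`, `deg` integration over `ℙ(E)`,
`ξ` the tautological class, `f` the fiber class, `dE = deg E*`, `dL = deg L`,
`dK = deg K_C`, with `f² = 0`, Grothendieck relation `ξ⁵ = -dE·fξ⁴` (so `∫ξ⁵ = deg E`),
and `∫ fξ⁴ = 1`.  Then `ch₂(T_X)·S` is the integral over `ℙ(E)` of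
`((1/2)ξ² + (dE - 2dL)fξ)·(m(3ξ + (dE - dL - dK)f))²·(2ξ + dL·f)`. -/
theorem stmt12
    (A : Type) [CommRing A] [Algebra ℚ A]
    (deg : A →ₗ[ℚ] ℚ)
    (ξ f : A)
    (dE dL dK m : ℚ)                   -- deg E*, deg L, deg K_C, m
    (hm : 0 < m)
    (hf : f ^ 2 = 0)
    (hgroth : ξ ^ 5 = (-dE) • (f * ξ ^ 4))
    (hfib : deg (f * ξ ^ 4) = 1) :
    deg ((((1 : ℚ)/2) • ξ ^ 2 + (dE - 2 * dL) • (f * ξ))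
          * (m • ((3 : ℚ) • ξ + (dE - dL - dK) • f)) ^ 2
          * ((2 : ℚ) • ξ + dL • f))
      = m ^ 2 * (15 * dE - (75 : ℚ)/2 * dL - 6 * dK)
    ∧ deg ((((1 : ℚ)/2) • ξ ^ 2 + (dE - 2 * dL) • (f * ξ))
          * (m • ((3 : ℚ) • ξ + (dE - dL - dK) • f)) ^ 2
          * ((2 : ℚ) • ξ + dL • f))
      = -((15 : ℚ)/2) * m ^ 2 * ((2 * (-dE) + 5 * dL) + (4 : ℚ)/5 * dK) := by
  set expr : A := ((((1 : ℚ)/2) • ξ ^ 2 + (dE - 2 * dL) • (f * ξ))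
          * (m • ((3 : ℚ) • ξ + (dE - dL - dK) • f)) ^ 2
          * ((2 : ℚ) • ξ + dL • f)) with hexpr
  have ht : (2 : A) * (((1 : ℚ)/2) • (1 : A)) = 1 := by
    rw [Algebra.smul_def, mul_one, ← map_ofNat (algebraMap ℚ A) 2, ← map_mul]
    norm_num
  have hg : ξ ^ 5 = -(algebraMap ℚ A dE * (f * ξ ^ 4)) := by
    rw [hgroth, Algebra.smul_def, map_neg, neg_mul]
  have key : (2 : A) * expr
      = (m ^ 2 * (30 * dE - 75 * dL - 12 * dK)) • (f * ξ ^ 4) := by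
    rw [hexpr]
    simp only [Algebra.smul_def, map_sub, map_add, map_mul, map_neg, map_pow, map_one,
      map_ofNat]
    have ht' : (2 : A) * (algebraMap ℚ A ((1 : ℚ)/2) * 1) = 1 := by
      rw [Algebra.smul_def] at ht; exact ht
    set aE := algebraMap ℚ A dE
    set aL := algebraMap ℚ A dL
    set aK := algebraMap ℚ A dK
    set aM := algebraMap ℚ A m
    linear_combination
        (ξ ^ 2 * (aM * ((3 : A) * ξ + (aE - aL - aK) * f)) ^ 2
          * ((2 : A) * ξ + aL * f)) * ht'
      + ((18 : A) * aM ^ 2) * hg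
      + ((aM ^ 2 * ((2 : A) * (aE - aL - aK) ^ 2 + 6 * (aE - aL - aK) * aL
            + 18 * (aE - 2 * aL) * aL + 24 * (aE - 2 * aL) * (aE - aL - aK)) * ξ ^ 3
          + aM ^ 2 * ((aE - aL - aK) ^ 2 * aL
            + 12 * (aE - 2 * aL) * (aE - aL - aK) * aL
            + 4 * (aE - 2 * aL) * (aE - aL - aK) ^ 2) * (f * ξ ^ 2)
          + aM ^ 2 * ((2 : A) * (aE - 2 * aL) * (aE - aL - aK) ^ 2 * aL) * (f ^ 2 * ξ))) * hf
  have h2 : (2 : A) * expr = (2 : ℚ) • expr := by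
    rw [Algebra.smul_def, ← map_ofNat (algebraMap ℚ A) 2]
  have hdeg : 2 * deg expr = m ^ 2 * (30 * dE - 75 * dL - 12 * dK) := by
    rw [← smul_eq_mul, ← map_smul, ← h2, key, map_smul, hfib, smul_eq_mul, mul_one]
  constructor <;> linarith
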